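/- arXiv:2003.06547 — 10 statements merged into one kernel-verified Lean document; each statement's English description precedes it below -/
import Mathlib

section
/- If x₀, x₁, x₂ are complex roots of a trinomial t^m + A t^n + B (with complex coefficients, m > n > 0) satisfying |x₀| ≥ |x₁| ≥ |x₂|, then |1 − (x₂/x₁)^n| ≤ 2|x₁/x₀|^{m−n} + 2|x₁/x₀|^m, provided x₁ ≠ 0 and x₀ ≠ 0. -/
/-!
Three roots of `t^m + A t^n + B` make the columns `(xᵢ^m)`, `(xᵢ^n)`, `(1)` linearly dependent, so
the Vandermonde-like determinant vanishes. Dividing it by `x₀^m x₁^n`, and writing `u = x₁/x₀`,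
`w = x₂/x₁`, this reads `1 - w^n = u^(m-n) (1 - w^m) - u^m (w^n - w^m)`. Since `‖w‖ ≤ 1`, both
brackets have norm at most `2`.
-/

theorem det_trinomial_roots_eq_zero {R : Type*} [CommRing R] {m n : ℕ} {A B x y z : R}
    (hx : x ^ m + A * x ^ n + B = 0) (hy : y ^ m + A * y ^ n + B = 0)
    (hz : z ^ m + A * z ^ n + B = 0) :
    !![x ^ m, x ^ n, 1; y ^ m, y ^ n, 1; z ^ m, z ^ n, 1].det = 0 := by
  rw [Matrix.det_fin_three]
  simp only [Matrix.of_apply, Matrix.cons_val', Matrix.cons_val_zero, Matrix.cons_val_fin_one,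
    Matrix.cons_val_one, Matrix.cons_val]
  linear_combination (y ^ n - z ^ n) * hx + (z ^ n - x ^ n) * hy + (x ^ n - y ^ n) * hz

theorem one_sub_div_pow_eq_of_trinomial_roots {K : Type*} [Field K] {m n : ℕ} (hnm : n ≤ m)
    {A B x₀ x₁ x₂ : K} (h₀ : x₀ ^ m + A * x₀ ^ n + B = 0) (h₁ : x₁ ^ m + A * x₁ ^ n + B = 0)
    (h₂ : x₂ ^ m + A * x₂ ^ n + B = 0) (hx₀ : x₀ ≠ 0) (hx₁ : x₁ ≠ 0) :
    1 - (x₂ / x₁) ^ n =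
      (x₁ / x₀) ^ (m - n) * (1 - (x₂ / x₁) ^ m) -
        (x₁ / x₀) ^ m * ((x₂ / x₁) ^ n - (x₂ / x₁) ^ m) := by
  have hdet := det_trinomial_roots_eq_zero h₀ h₁ h₂
  rw [Matrix.det_fin_three] at hdet
  simp only [Matrix.of_apply, Matrix.cons_val', Matrix.cons_val_zero, Matrix.cons_val_fin_one,
    Matrix.cons_val_one, Matrix.cons_val, mul_one, one_mul] at hdet
  obtain ⟨k, rfl⟩ := Nat.exists_eq_add_of_le' hnm
  rw [Nat.add_sub_cancel]
  simp only [div_pow]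
  field_simp
  linear_combination x₀ ^ k * x₁ ^ (k + n) * hdet

theorem norm_pow_sub_pow_le_two {K : Type*} [NormedDivisionRing K] {w : K} (hw : ‖w‖ ≤ 1)
    (a b : ℕ) : ‖w ^ a - w ^ b‖ ≤ 2 := by
  have hpow (c : ℕ) : ‖w ^ c‖ ≤ 1 := by
    rw [norm_pow]
    exact pow_le_one₀ (norm_nonneg w) hw
  simpa [one_add_one_eq_two] using norm_sub_le_of_le (hpow a) (hpow b)

theorem trinomial_roots_complex_estimate_general (m n : ℕ) (A B : ℂ)
    (hmn : n < m)
    (x₀ x₁ x₂ : ℂ)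
    (h₀ : x₀ ^ m + A * x₀ ^ n + B = 0)
    (h₁ : x₁ ^ m + A * x₁ ^ n + B = 0)
    (h₂ : x₂ ^ m + A * x₂ ^ n + B = 0)
    (hle₂ : ‖x₂‖ ≤ ‖x₁‖)
    (hx₀ : x₀ ≠ 0) (hx₁ : x₁ ≠ 0) :
    ‖1 - (x₂ / x₁) ^ n‖ ≤
      2 * ‖x₁ / x₀‖ ^ (m - n) + 2 * ‖x₁ / x₀‖ ^ m := by
  have hw : ‖x₂ / x₁‖ ≤ 1 := by
    rw [norm_div]
    exact div_le_one_of_le₀ hle₂ (norm_nonneg x₁)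
  rw [one_sub_div_pow_eq_of_trinomial_roots hmn.le h₀ h₁ h₂ hx₀ hx₁]
  calc _ ≤ ‖x₁ / x₀‖ ^ (m - n) * ‖1 - (x₂ / x₁) ^ m‖ +
        ‖x₁ / x₀‖ ^ m * ‖(x₂ / x₁) ^ n - (x₂ / x₁) ^ m‖ := by
        rw [← norm_pow, ← norm_pow, ← norm_mul, ← norm_mul]
        exact norm_sub_le _ _
    _ ≤ ‖x₁ / x₀‖ ^ (m - n) * 2 + ‖x₁ / x₀‖ ^ m * 2 := by
        gcongr
        · simpa only [pow_zero] using norm_pow_sub_pow_le_two hw 0 m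
        · exact norm_pow_sub_pow_le_two hw n m
    _ = 2 * ‖x₁ / x₀‖ ^ (m - n) + 2 * ‖x₁ / x₀‖ ^ m := by ring

/-- If `x₀, x₁, x₂` are complex roots of `t^m + A t^n + B` with `|x₀| ≥ |x₁| ≥ |x₂|`,
`x₀ ≠ 0`, `x₁ ≠ 0`, then `|1 − (x₂/x₁)^n| ≤ 2|x₁/x₀|^{m−n} + 2|x₁/x₀|^m`. -/
theorem trinomial_roots_complex_estimate (m n : ℕ) (A B : ℂ)
    (hmn : n < m) (hn : 0 < n)
    (x₀ x₁ x₂ : ℂ)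
    (h₀ : x₀ ^ m + A * x₀ ^ n + B = 0)
    (h₁ : x₁ ^ m + A * x₁ ^ n + B = 0)
    (h₂ : x₂ ^ m + A * x₂ ^ n + B = 0)
    (hle₁ : ‖x₁‖ ≤ ‖x₀‖)
    (hle₂ : ‖x₂‖ ≤ ‖x₁‖)
    (hx₀ : x₀ ≠ 0) (hx₁ : x₁ ≠ 0) :
    ‖1 - (x₂ / x₁) ^ n‖ ≤
      2 * ‖x₁ / x₀‖ ^ (m - n) + 2 * ‖x₁ / x₀‖ ^ m :=
  trinomial_roots_complex_estimate_general m n A B hmn x₀ x₁ x₂ h₀ h₁ h₂ hle₂ hx₀ hx₁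
end

section
/- If x₀, x₁, x₂ are complex roots of a trinomial t^m + A t^n + B with |x₀| ≥ |x₁| ≥ |x₂| and x₁ ≠ 0, x₀ ≠ 0, then 1 − |x₂/x₁| ≤ 2|x₁/x₀| + 2|x₁/x₀|³. -/
/-!
Three roots of `t^m + A t^n + B` make the determinant with rows `(xᵢ^m, xᵢ^n, 1)` vanish.
Dividing it by `x₀^m x₁^n` and writing `ρ = x₁/x₀`, `w = x₂/x₁`, `m = n + k` gives
`1 - w^n = ρ^k (1 - w^m) - ρ^m w^n (1 - w^k)`, whose right side has norm at most `2ρ^k + 2ρ^m`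
while the left side has norm at least `1 - |w|`. For `m ≥ 3` this is the claim; for `m = 2`
the trinomial is a quadratic, so two of the three roots coincide.
-/

theorem trinomial_roots_ratio_identity {K : Type*} [Field K] {n k : ℕ} {A B x₀ x₁ x₂ : K}
    (h₀ : x₀ ^ (n + k) + A * x₀ ^ n + B = 0)
    (h₁ : x₁ ^ (n + k) + A * x₁ ^ n + B = 0)
    (h₂ : x₂ ^ (n + k) + A * x₂ ^ n + B = 0)
    (hx₀ : x₀ ≠ 0) (hx₁ : x₁ ≠ 0) :
    1 - (x₂ / x₁) ^ n = (x₁ / x₀) ^ k * (1 - (x₂ / x₁) ^ (n + k))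
      - (x₁ / x₀) ^ (n + k) * (x₂ / x₁) ^ n * (1 - (x₂ / x₁) ^ k) := by
  have e₁ : x₁ = x₁ / x₀ * x₀ := (div_mul_cancel₀ x₁ hx₀).symm
  have e₂ : x₂ = x₂ / x₁ * (x₁ / x₀ * x₀) := by rw [← e₁, div_mul_cancel₀ x₂ hx₁]
  generalize x₁ / x₀ = ρ at e₁ e₂ ⊢
  generalize x₂ / x₁ = w at e₂ ⊢
  subst e₁ e₂
  have hρ : ρ ≠ 0 := left_ne_zero_of_mul hx₁
  refine mul_left_cancel₀ (mul_ne_zero (pow_ne_zero (2 * n + k) hx₀) (pow_ne_zero n hρ)) ?_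
  -- the vanishing determinant, expanded along its last column
  linear_combination ((ρ * x₀) ^ n - (w * (ρ * x₀)) ^ n) * h₀
    - (x₀ ^ n - (w * (ρ * x₀)) ^ n) * h₁ + (x₀ ^ n - (ρ * x₀) ^ n) * h₂

section NormOneClass

variable {R : Type*} [SeminormedRing R] [NormOneClass R] {w : R}

theorem one_sub_norm_le_norm_one_sub_pow (hw : ‖w‖ ≤ 1) {n : ℕ} (hn : n ≠ 0) :
    1 - ‖w‖ ≤ ‖1 - w ^ n‖ :=
  calc 1 - ‖w‖ ≤ 1 - ‖w‖ ^ n := by gcongr; exact pow_le_of_le_one (norm_nonneg w) hw hn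
    _ ≤ ‖(1 : R)‖ - ‖w ^ n‖ := by rw [norm_one]; gcongr; exact norm_pow_le w n
    _ ≤ ‖1 - w ^ n‖ := norm_sub_norm_le 1 (w ^ n)

theorem norm_one_sub_pow_le_two (hw : ‖w‖ ≤ 1) (n : ℕ) : ‖1 - w ^ n‖ ≤ 2 :=
  calc ‖1 - w ^ n‖ ≤ ‖(1 : R)‖ + ‖w ^ n‖ := norm_sub_le 1 (w ^ n)
    _ ≤ 1 + 1 := by
      rw [norm_one]; gcongr; exact (norm_pow_le w n).trans (pow_le_one₀ (norm_nonneg w) hw)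
    _ = 2 := one_add_one_eq_two

end NormOneClass

theorem one_sub_norm_div_le_of_trinomial_roots {K : Type*} [NormedField K] {n k : ℕ}
    {A B x₀ x₁ x₂ : K} (hn : n ≠ 0)
    (h₀ : x₀ ^ (n + k) + A * x₀ ^ n + B = 0)
    (h₁ : x₁ ^ (n + k) + A * x₁ ^ n + B = 0)
    (h₂ : x₂ ^ (n + k) + A * x₂ ^ n + B = 0)
    (hle : ‖x₂‖ ≤ ‖x₁‖) (hx₀ : x₀ ≠ 0) (hx₁ : x₁ ≠ 0) :
    1 - ‖x₂ / x₁‖ ≤ 2 * ‖x₁ / x₀‖ ^ k + 2 * ‖x₁ / x₀‖ ^ (n + k) := by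
  have hw : ‖x₂ / x₁‖ ≤ 1 := by
    rw [norm_div]; exact div_le_one_of_le₀ hle (norm_nonneg x₁)
  calc 1 - ‖x₂ / x₁‖ ≤ ‖1 - (x₂ / x₁) ^ n‖ := one_sub_norm_le_norm_one_sub_pow hw hn
    _ = ‖(x₁ / x₀) ^ k * (1 - (x₂ / x₁) ^ (n + k))
          - (x₁ / x₀) ^ (n + k) * (x₂ / x₁) ^ n * (1 - (x₂ / x₁) ^ k)‖ := by
      rw [trinomial_roots_ratio_identity h₀ h₁ h₂ hx₀ hx₁]
    _ ≤ ‖x₁ / x₀‖ ^ k * 2 + ‖x₁ / x₀‖ ^ (n + k) * 1 * 2 := by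
      refine (norm_sub_le _ _).trans ?_
      simp only [norm_mul, norm_pow]
      gcongr
      · exact norm_one_sub_pow_le_two hw _
      · exact pow_le_one₀ (norm_nonneg _) hw
      · exact norm_one_sub_pow_le_two hw _
    _ = 2 * ‖x₁ / x₀‖ ^ k + 2 * ‖x₁ / x₀‖ ^ (n + k) := by ring

theorem quadratic_roots_two_eq {R : Type*} [CommRing R] {A B x₀ x₁ x₂ : R}
    (h₀ : x₀ ^ 2 + A * x₀ + B = 0) (h₁ : x₁ ^ 2 + A * x₁ + B = 0)
    (h₂ : x₂ ^ 2 + A * x₂ + B = 0) :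
    (x₀ - x₁) * (x₀ - x₂) * (x₁ - x₂) = 0 := by
  linear_combination (x₁ - x₂) * h₀ - (x₀ - x₂) * h₁ + (x₀ - x₁) * h₂

theorem norm_eq_or_norm_eq_of_quadratic_roots {K : Type*} [NormedField K] {A B x₀ x₁ x₂ : K}
    (h₀ : x₀ ^ 2 + A * x₀ + B = 0) (h₁ : x₁ ^ 2 + A * x₁ + B = 0)
    (h₂ : x₂ ^ 2 + A * x₂ + B = 0) (hle₁ : ‖x₁‖ ≤ ‖x₀‖) (hle₂ : ‖x₂‖ ≤ ‖x₁‖) :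
    ‖x₁‖ = ‖x₀‖ ∨ ‖x₂‖ = ‖x₁‖ := by
  rcases mul_eq_zero.1 (quadratic_roots_two_eq h₀ h₁ h₂) with h | h
  · rcases mul_eq_zero.1 h with h | h
    · exact .inl (by rw [sub_eq_zero.1 h])
    · exact .inr (le_antisymm hle₂ (sub_eq_zero.1 h ▸ hle₁))
  · exact .inr (by rw [sub_eq_zero.1 h])

/-- If `x₀, x₁, x₂` are complex roots of `t^m + A t^n + B` with `|x₀| ≥ |x₁| ≥ |x₂|`,
`x₀ ≠ 0`, `x₁ ≠ 0`, then `1 − |x₂/x₁| ≤ 2|x₁/x₀| + 2|x₁/x₀|³`. -/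
theorem trinomial_roots_complex_estimate_weak (m n : ℕ) (A B : ℂ)
    (hmn : n < m) (hn : 0 < n)
    (x₀ x₁ x₂ : ℂ)
    (h₀ : x₀ ^ m + A * x₀ ^ n + B = 0)
    (h₁ : x₁ ^ m + A * x₁ ^ n + B = 0)
    (h₂ : x₂ ^ m + A * x₂ ^ n + B = 0)
    (hle₁ : ‖x₁‖ ≤ ‖x₀‖)
    (hle₂ : ‖x₂‖ ≤ ‖x₁‖)
    (hx₀ : x₀ ≠ 0) (hx₁ : x₁ ≠ 0) :
    1 - ‖x₂ / x₁‖ ≤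
      2 * ‖x₁ / x₀‖ + 2 * ‖x₁ / x₀‖ ^ 3 := by
  obtain ⟨k, hk, rfl⟩ : ∃ k, 0 < k ∧ m = n + k := ⟨m - n, by omega, by omega⟩
  have hρ₀ : 0 ≤ ‖x₁ / x₀‖ := norm_nonneg _
  have hρ₁ : ‖x₁ / x₀‖ ≤ 1 := by
    rw [norm_div]; exact div_le_one_of_le₀ hle₁ (norm_nonneg x₀)
  rcases le_or_gt 3 (n + k) with hm | hm
  · have hρk : ‖x₁ / x₀‖ ^ k ≤ ‖x₁ / x₀‖ := pow_le_of_le_one hρ₀ hρ₁ hk.ne'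
    have hρm : ‖x₁ / x₀‖ ^ (n + k) ≤ ‖x₁ / x₀‖ ^ 3 := pow_le_pow_of_le_one hρ₀ hρ₁ hm
    linarith [one_sub_norm_div_le_of_trinomial_roots hn.ne' h₀ h₁ h₂ hle₂ hx₀ hx₁]
  · obtain ⟨rfl, rfl⟩ : n = 1 ∧ k = 1 := by omega
    simp only [Nat.reduceAdd, pow_one] at h₀ h₁ h₂
    rcases norm_eq_or_norm_eq_of_quadratic_roots h₀ h₁ h₂ hle₁ hle₂ with h | h
    · have hρ : ‖x₁ / x₀‖ = 1 := by rw [norm_div, h, div_self (norm_ne_zero_iff.2 hx₀)]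
      rw [hρ]; linarith [norm_nonneg (x₂ / x₁)]
    · have hw : ‖x₂ / x₁‖ = 1 := by rw [norm_div, h, div_self (norm_ne_zero_iff.2 hx₁)]
      rw [hw, sub_self]; positivity
end

section
/- Let K be a finite extension of ℚ_p, and let f(t) = t^m + A t^n + B ∈ K[t] be a trinomial (m > n > 0, B ≠ 0) whose roots in K take exactly two absolute values a > b. Then for any two roots x₁, x₂ with |x₁|_p = |x₂|_p = b one has |1 − (x₂/x₁)^n|_p ≤ (b/a)^{m−n}. -/
/-!
Comparing the three terms of `f(x₁) = 0` and `f(x₀) = 0` in the ultrametric absolute value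
pins down `|A|`: at the small root, `|B| ≤ max(b^m, |A| b^n)`, which is strictly below
`max(a^m, |A| a^n)`, so at the large root the two terms `x₀^m` and `A x₀^n` must balance,
i.e. `|A| = a^(m-n)`. Subtracting the equations for `x₁` and `x₂` gives
`A (x₁^n - x₂^n) = x₂^m - x₁^m`, whence `|A| |x₁^n - x₂^n| ≤ b^m`; dividing by `|A| b^n`
gives the bound.
-/

open IsUltrametricDist

lemma max_pow_mul_pow_lt_max {a b c : ℝ} {m n : ℕ} (hb : 0 ≤ b) (hba : b < a)
    (hc : 0 ≤ c) (hm : m ≠ 0) (hn : n ≠ 0) :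
    max (b ^ m) (c * b ^ n) < max (a ^ m) (c * a ^ n) := by
  have hpow_m : b ^ m < a ^ m := pow_lt_pow_left₀ hba hb hm
  refine max_lt (hpow_m.trans_le (le_max_left _ _)) ?_
  rcases hc.eq_or_lt with rfl | hc
  · simpa using (pow_nonneg hb m).trans_lt hpow_m
  · exact lt_max_of_lt_right (mul_lt_mul_of_pos_left (pow_lt_pow_left₀ hba hb hn) hc)

section Trinomial

variable {K : Type*} [NormedField K] [IsUltrametricDist K] {m n : ℕ} {A B : K}

lemma norm_const_le_of_trinomial_eq_zero {x : K} (hx : x ^ m + A * x ^ n + B = 0) :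
    ‖B‖ ≤ max (‖x‖ ^ m) (‖A‖ * ‖x‖ ^ n) := by
  rw [eq_neg_of_add_eq_zero_right hx, norm_neg, ← norm_pow, ← norm_pow, ← norm_mul]
  exact norm_add_le_max _ _

lemma norm_coeff_eq_of_trinomial_eq_zero {x₀ x₁ : K} (hm : m ≠ 0) (hn : n ≠ 0) (hnm : n ≤ m)
    (h₀ : x₀ ^ m + A * x₀ ^ n + B = 0) (h₁ : x₁ ^ m + A * x₁ ^ n + B = 0)
    (hlt : ‖x₁‖ < ‖x₀‖) : ‖A‖ = ‖x₀‖ ^ (m - n) := by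
  have hconst : ‖x₀ ^ m + A * x₀ ^ n‖ < max ‖x₀ ^ m‖ ‖A * x₀ ^ n‖ := by
    rw [eq_neg_of_add_eq_zero_left h₀, norm_neg, norm_pow, norm_mul, norm_pow]
    exact (norm_const_le_of_trinomial_eq_zero h₁).trans_lt
      (max_pow_mul_pow_lt_max (norm_nonneg _) hlt (norm_nonneg _) hm hn)
  have hbalance := norm_eq_of_add_norm_lt_max hconst
  rw [norm_pow, norm_mul, norm_pow, ← Nat.sub_add_cancel hnm, pow_add] at hbalance
  exact (mul_right_cancel₀ (pow_pos ((norm_nonneg _).trans_lt hlt) n).ne' hbalance).symm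

lemma norm_coeff_mul_norm_pow_sub_pow_le {x₁ x₂ : K}
    (h₁ : x₁ ^ m + A * x₁ ^ n + B = 0) (h₂ : x₂ ^ m + A * x₂ ^ n + B = 0)
    (hnorm : ‖x₂‖ = ‖x₁‖) : ‖A‖ * ‖x₁ ^ n - x₂ ^ n‖ ≤ ‖x₁‖ ^ m := by
  have hdiff : A * (x₁ ^ n - x₂ ^ n) = x₂ ^ m - x₁ ^ m := by linear_combination h₁ - h₂
  rw [← norm_mul, hdiff]
  simpa [sub_eq_add_neg, hnorm] using norm_add_le_max (x₂ ^ m) (-x₁ ^ m)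

end Trinomial

theorem trinomial_padic_small_roots_close_general
    (K : Type*) [NormedField K] [IsUltrametricDist K]
    (m n : ℕ) (A B : K) (hmn : n < m) (hn : 0 < n) (hB : B ≠ 0)
    (a b : ℝ) (hab : b < a)
    (hexa : ∃ x : K, x ^ m + A * x ^ n + B = 0 ∧ ‖x‖ = a)
    (x₁ x₂ : K)
    (h₁ : x₁ ^ m + A * x₁ ^ n + B = 0)
    (h₂ : x₂ ^ m + A * x₂ ^ n + B = 0)
    (hn₁ : ‖x₁‖ = b) (hn₂ : ‖x₂‖ = b) :
    ‖1 - (x₂ / x₁) ^ n‖ ≤ (b / a) ^ (m - n) := by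
  obtain ⟨x₀, h₀, hn₀⟩ := hexa
  have hx₁ : x₁ ≠ 0 := by
    rintro rfl
    exact hB (by simpa [zero_pow (hn.trans hmn).ne', zero_pow hn.ne'] using h₁)
  have hb : 0 < b := hn₁ ▸ norm_pos_iff.mpr hx₁
  have hA : ‖A‖ = a ^ (m - n) := hn₀ ▸ norm_coeff_eq_of_trinomial_eq_zero (hn.trans hmn).ne'
    hn.ne' hmn.le h₀ h₁ (hn₁.trans_lt (hn₀ ▸ hab))
  have hclose := norm_coeff_mul_norm_pow_sub_pow_le h₁ h₂ (hn₂.trans hn₁.symm)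
  have hbm : b ^ m = b ^ (m - n) * b ^ n := by rw [← pow_add, Nat.sub_add_cancel hmn.le]
  rw [hA, hn₁, hbm] at hclose
  have hquot : ‖1 - (x₂ / x₁) ^ n‖ = ‖x₁ ^ n - x₂ ^ n‖ / b ^ n := by
    rw [← hn₁, ← norm_pow, ← norm_div, sub_div, div_self (pow_ne_zero n hx₁), div_pow]
  rw [hquot, div_pow, div_le_div_iff₀ (pow_pos hb n) (pow_pos (hb.trans hab) _)]
  linarith

/-- If the roots in a finite extension `K/ℚ_p` of a trinomial `t^m + A t^n + B`
take exactly two absolute values `a > b`, then for any two roots of absolute value `b`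
one has `|1 − (x₂/x₁)^n|_p ≤ (b/a)^{m−n}`. -/
theorem trinomial_padic_small_roots_close
    (p : ℕ) [Fact p.Prime] (K : Type*) [NormedField K] [IsUltrametricDist K]
    [Algebra ℚ_[p] K] [FiniteDimensional ℚ_[p] K]
    (hext : ∀ q : ℚ_[p], ‖algebraMap ℚ_[p] K q‖ = ‖q‖)
    (m n : ℕ) (A B : K) (hmn : n < m) (hn : 0 < n) (hB : B ≠ 0)
    (a b : ℝ) (hab : b < a)
    (hvals : ∀ x : K, x ^ m + A * x ^ n + B = 0 → ‖x‖ = a ∨ ‖x‖ = b)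
    (hexa : ∃ x : K, x ^ m + A * x ^ n + B = 0 ∧ ‖x‖ = a)
    (hexb : ∃ x : K, x ^ m + A * x ^ n + B = 0 ∧ ‖x‖ = b)
    (x₁ x₂ : K)
    (h₁ : x₁ ^ m + A * x₁ ^ n + B = 0)
    (h₂ : x₂ ^ m + A * x₂ ^ n + B = 0)
    (hn₁ : ‖x₁‖ = b) (hn₂ : ‖x₂‖ = b) :
    ‖1 - (x₂ / x₁) ^ n‖ ≤ (b / a) ^ (m - n) :=
  trinomial_padic_small_roots_close_general K m n A B hmn hn hB a b hab hexa x₁ x₂ h₁ h₂ hn₁ hn₂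
end

section
/- Let p be a prime, L a number field, 𝔭 a prime of L above p which is unramified over p, and θ ∈ L a 𝔭-adic unit. Let r be the multiplicative order of θ modulo 𝔭. Then for every positive integer k with θ^k ≡ 1 (mod 𝔭), one has r ∣ k; moreover, if p > 2, then ν_p(k) = ν_𝔭(1 − θ^k) − ν_𝔭(1 − θ^r). -/
/-!
Modulo `𝔭` the order of `θ` is `r`, so `r ∣ k`; and `p ∤ r` because the Frobenius map is injective
on `𝓞 L ⧸ 𝔭`. For `y ≡ 1 (mod 𝔭)` write `1 - y ^ m = (1 - y) * (1 + y + ⋯ + y ^ (m - 1))`: the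
second factor is `≡ m (mod 𝔭)`, and for odd `m = p` it is `≡ p (mod 𝔭 ^ 2)`. As `𝔭` is unramified
over `p`, `p ∈ 𝔭 \ 𝔭 ^ 2`, so every factor `p` of the exponent raises `ν_𝔭` by exactly one and
factors prime to `p` leave it unchanged.
-/

open NumberField Finset

section CommRing

variable {R : Type*} [CommRing R] {I : Ideal R}

theorem Ideal.Quotient.mk_pow_eq_one_iff (x : R) (n : ℕ) :
    Ideal.Quotient.mk I x ^ n = 1 ↔ x ^ n - 1 ∈ I := by
  rw [← map_pow, ← map_one (Ideal.Quotient.mk I), Ideal.Quotient.eq]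

theorem orderOf_quotient_mk_eq {θ : R} {r : ℕ} (hr : 0 < r) (hθr : θ ^ r - 1 ∈ I)
    (hrmin : ∀ s : ℕ, 0 < s → s < r → θ ^ s - 1 ∉ I) :
    orderOf (Ideal.Quotient.mk I θ) = r := by
  simp only [orderOf_eq_iff hr, ne_eq, Ideal.Quotient.mk_pow_eq_one_iff]
  exact ⟨hθr, fun s hs hs0 => hrmin s hs0 hs⟩

theorem Ideal.charP_quotient_of_natCast_mem [I.IsPrime] {p : ℕ} (hp : p.Prime)
    (hpI : (p : R) ∈ I) : CharP (R ⧸ I) p :=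
  (CharP.charP_iff_prime_eq_zero hp).2 <| by
    rwa [← map_natCast (Ideal.Quotient.mk I), Ideal.Quotient.eq_zero_iff_mem]

theorem Ideal.natCast_mem_iff_dvd [I.IsPrime] {p : ℕ} (hp : p.Prime) (hpI : (p : R) ∈ I)
    (m : ℕ) : (m : R) ∈ I ↔ p ∣ m := by
  have := Ideal.charP_quotient_of_natCast_mem hp hpI
  rw [← Ideal.Quotient.eq_zero_iff_mem, map_natCast, CharP.cast_eq_zero_iff (R ⧸ I) p]

theorem Ideal.natCast_notMem_sq_of_ramificationIdx'_eq_one {p : ℕ} (hpI : (p : R) ∈ I)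
    (h : Ideal.ramificationIdx' (Ideal.span {(p : ℤ)}) I = 1) : (p : R) ∉ I ^ 2 := by
  have hmap : Ideal.map (algebraMap ℤ R) (Ideal.span {(p : ℤ)}) = Ideal.span {(p : R)} := by
    simp [Ideal.map_span]
  have hle : Ideal.map (algebraMap ℤ R) (Ideal.span {(p : ℤ)}) ≤ I := by
    rwa [hmap, Ideal.span_le, Set.singleton_subset_iff]
  intro hp2
  refine (Ideal.ramificationIdx'_ne_one_iff hle).2 ?_ h
  rwa [hmap, Ideal.span_le, Set.singleton_subset_iff]

theorem pow_sub_one_mem {y : R} (hy : y - 1 ∈ I) (n : ℕ) : y ^ n - 1 ∈ I := by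
  rw [← mul_geom_sum]
  exact I.mul_mem_right _ hy

theorem one_sub_pow_eq_mul_geom_sum (y : R) (n : ℕ) :
    1 - y ^ n = (1 - y) * ∑ i ∈ range n, y ^ i := by
  linear_combination mul_geom_sum y n

theorem geom_sum_sub_natCast_eq (y : R) (n : ℕ) :
    ∑ i ∈ range n, y ^ i - n = ∑ i ∈ range n, (y ^ i - 1) := by
  simp [sum_sub_distrib]

theorem geom_sum_sub_natCast_mem {y : R} (hy : y - 1 ∈ I) (n : ℕ) :
    ∑ i ∈ range n, y ^ i - n ∈ I := by
  rw [geom_sum_sub_natCast_eq]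
  exact I.sum_mem fun i _ => pow_sub_one_mem hy i

theorem Odd.dvd_sum_range_id {n : ℕ} (hn : Odd n) : n ∣ ∑ i ∈ range n, i := by
  rw [sum_range_id, Nat.mul_div_assoc n (Nat.Odd.sub_odd hn odd_one).two_dvd]
  exact dvd_mul_right n _

theorem geom_sum_sub_natCast_mem_sq {y : R} (hy : y - 1 ∈ I) {n : ℕ} (hn : Odd n)
    (hnI : (n : R) ∈ I) : ∑ i ∈ range n, y ^ i - n ∈ I ^ 2 := by
  have hsplit : ∑ i ∈ range n, y ^ i - n = (y - 1) * ∑ i ∈ range n, ∑ j ∈ range i, y ^ j := by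
    rw [geom_sum_sub_natCast_eq, mul_sum]
    simp only [mul_geom_sum]
  have hinner : ∑ i ∈ range n, ∑ j ∈ range i, y ^ j ∈ I := by
    obtain ⟨c, hc⟩ := hn.dvd_sum_range_id
    have hid : ∑ i ∈ range n, ∑ j ∈ range i, y ^ j =
        ∑ i ∈ range n, (∑ j ∈ range i, y ^ j - i) + (n : R) * c := by
      rw [sum_sub_distrib, ← Nat.cast_sum, hc]
      push_cast
      ring
    rw [hid]
    exact add_mem (I.sum_mem fun i _ => geom_sum_sub_natCast_mem hy i) (I.mul_mem_right _ hnI)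
  rw [hsplit, pow_two]
  exact Ideal.mul_mem_mul hy hinner

end CommRing

theorem not_dvd_orderOf_of_expChar {K : Type*} [CommRing K] [IsReduced K] {p : ℕ} [ExpChar K p]
    (hp : p.Prime) {x : K} (hx : 0 < orderOf x) : ¬p ∣ orderOf x := by
  rintro ⟨s, hs⟩
  have hs0 : 0 < s := Nat.pos_of_mul_pos_left (hs ▸ hx)
  have hxs : x ^ s = 1 := by
    rw [← ExpChar.pow_prime_pow_mul_eq_one_iff p 1 s, pow_one, ← hs, pow_orderOf_eq_one]
  have := orderOf_le_of_pow_eq_one hs0 hxs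
  have := hp.two_le
  nlinarith

section DedekindDomain

variable {R : Type*} [CommRing R] [IsDedekindDomain R] {P : Ideal R}

theorem emultiplicity_span_singleton_mul (hP : Prime P) (a b : R) :
    emultiplicity P (Ideal.span {a * b}) =
      emultiplicity P (Ideal.span {a}) + emultiplicity P (Ideal.span {b}) := by
  rw [← Ideal.span_singleton_mul_span_singleton]
  exact emultiplicity_mul hP

theorem emultiplicity_span_singleton_eq_zero {a : R} (ha : a ∉ P) :
    emultiplicity P (Ideal.span {a}) = 0 := by
  rwa [emultiplicity_eq_zero, Ideal.dvd_span_singleton]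

theorem emultiplicity_span_singleton_eq_one {a : R} (ha : a ∈ P) (ha2 : a ∉ P ^ 2) :
    emultiplicity P (Ideal.span {a}) = 1 := by
  rw [← Nat.cast_one, emultiplicity_eq_coe, pow_one, Ideal.dvd_span_singleton,
    Ideal.dvd_span_singleton]
  exact ⟨ha, ha2⟩

theorem emultiplicity_one_sub_pow_of_natCast_notMem (hP : Prime P) {y : R} (hy : y - 1 ∈ P)
    {m : ℕ} (hm : (m : R) ∉ P) :
    emultiplicity P (Ideal.span {1 - y ^ m}) = emultiplicity P (Ideal.span {1 - y}) := by
  have hS : ∑ i ∈ range m, y ^ i ∉ P := fun hS =>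
    hm (by simpa using P.sub_mem hS (geom_sum_sub_natCast_mem hy m))
  rw [one_sub_pow_eq_mul_geom_sum, emultiplicity_span_singleton_mul hP,
    emultiplicity_span_singleton_eq_zero hS, add_zero]

theorem emultiplicity_one_sub_pow_of_odd (hP : Prime P) {y : R} (hy : y - 1 ∈ P)
    {n : ℕ} (hn : Odd n) (hnP : (n : R) ∈ P) (hnP2 : (n : R) ∉ P ^ 2) :
    emultiplicity P (Ideal.span {1 - y ^ n}) = emultiplicity P (Ideal.span {1 - y}) + 1 := by
  have hSn := geom_sum_sub_natCast_mem_sq hy hn hnP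
  have hS : ∑ i ∈ range n, y ^ i ∈ P := by
    simpa using P.add_mem (Ideal.pow_le_self two_ne_zero hSn) hnP
  have hS2 : ∑ i ∈ range n, y ^ i ∉ P ^ 2 := fun hS2 =>
    hnP2 (by simpa using (P ^ 2).sub_mem hS2 hSn)
  rw [one_sub_pow_eq_mul_geom_sum, emultiplicity_span_singleton_mul hP,
    emultiplicity_span_singleton_eq_one hS hS2]

theorem emultiplicity_one_sub_pow_pow_of_odd (hP : Prime P) {y : R} (hy : y - 1 ∈ P)
    {n : ℕ} (hn : Odd n) (hnP : (n : R) ∈ P) (hnP2 : (n : R) ∉ P ^ 2) (e : ℕ) :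
    emultiplicity P (Ideal.span {1 - y ^ n ^ e}) = e + emultiplicity P (Ideal.span {1 - y}) := by
  induction e with
  | zero => simp
  | succ e ih =>
    rw [pow_succ, pow_mul, emultiplicity_one_sub_pow_of_odd hP (pow_sub_one_mem hy _) hn hnP hnP2,
      ih]
    push_cast
    ring

theorem emultiplicity_one_sub_pow (hP : Prime P) {p : ℕ} [Fact p.Prime] (hodd : Odd p)
    (hpP : (p : R) ∈ P) (hpP2 : (p : R) ∉ P ^ 2) {y : R} (hy : y - 1 ∈ P) {m : ℕ} (hm : m ≠ 0) :
    emultiplicity P (Ideal.span {1 - y ^ m}) =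
      padicValNat p m + emultiplicity P (Ideal.span {1 - y}) := by
  have hp : p.Prime := Fact.out
  have := Ideal.isPrime_of_prime hP
  obtain ⟨e, m', hm', rfl⟩ := Nat.exists_eq_pow_mul_and_not_dvd hm p hp.ne_one
  have hm'P : (m' : R) ∉ P := by rwa [Ideal.natCast_mem_iff_dvd hp hpP]
  rw [pow_mul', emultiplicity_one_sub_pow_pow_of_odd hP (pow_sub_one_mem hy m') hodd hpP hpP2,
    emultiplicity_one_sub_pow_of_natCast_notMem hP hy hm'P,
    padicValNat.mul (pow_ne_zero _ hp.ne_zero) (by rintro rfl; simp at hm'),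
    padicValNat.prime_pow, padicValNat.eq_zero_of_not_dvd hm', add_zero]

end DedekindDomain

theorem order_divides_and_lte_general (L : Type*) [Field L] [NumberField L]
    (p : ℕ) (hp : p.Prime) (𝔭 : Ideal (𝓞 L)) (hprime : 𝔭.IsPrime) (hbot : 𝔭 ≠ ⊥)
    (habove : ((p : ℕ) : 𝓞 L) ∈ 𝔭)
    (hunram : Ideal.ramificationIdx' (Ideal.span {(p : ℤ)}) 𝔭 = 1)
    (θ : 𝓞 L)
    (r : ℕ) (hr : 0 < r) (hθr : θ ^ r - 1 ∈ 𝔭)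
    (hrmin : ∀ s : ℕ, 0 < s → s < r → θ ^ s - 1 ∉ 𝔭)
    (k : ℕ) (hk : 0 < k) (hθk : θ ^ k - 1 ∈ 𝔭) :
    r ∣ k ∧
      (2 < p →
        emultiplicity 𝔭 (Ideal.span {1 - θ ^ k}) =
          (padicValNat p k : ℕ∞) + emultiplicity 𝔭 (Ideal.span {1 - θ ^ r})) := by
  have horder := orderOf_quotient_mk_eq hr hθr hrmin
  have hrk : r ∣ k :=
    horder ▸ orderOf_dvd_of_pow_eq_one ((Ideal.Quotient.mk_pow_eq_one_iff θ k).2 hθk)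
  refine ⟨hrk, fun hp2 => ?_⟩
  have := Fact.mk hp
  have := Ideal.charP_quotient_of_natCast_mem hp habove
  have : ExpChar (𝓞 L ⧸ 𝔭) p := ExpChar.prime hp
  have hpr : ¬p ∣ r := horder ▸ not_dvd_orderOf_of_expChar hp (horder ▸ hr)
  obtain ⟨q, rfl⟩ := hrk
  have hq : q ≠ 0 := by rintro rfl; simp at hk
  have hp𝔭2 := Ideal.natCast_notMem_sq_of_ramificationIdx'_eq_one habove hunram
  rw [pow_mul, emultiplicity_one_sub_pow (Ideal.prime_of_isPrime hbot hprime)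
      (hp.odd_of_ne_two hp2.ne') habove hp𝔭2 hθr hq,
    padicValNat.mul hr.ne' hq, padicValNat.eq_zero_of_not_dvd hpr, zero_add]

/-- Lifting-the-exponent for the order of `θ` modulo an unramified prime `𝔭` above `p`:
`r ∣ k`, and for `p > 2`, `ν_𝔭(1 − θ^k) = ν_p(k) + ν_𝔭(1 − θ^r)`. -/
theorem order_divides_and_lte (L : Type*) [Field L] [NumberField L]
    (p : ℕ) (hp : p.Prime) (𝔭 : Ideal (𝓞 L)) (hprime : 𝔭.IsPrime) (hbot : 𝔭 ≠ ⊥)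
    (habove : ((p : ℕ) : 𝓞 L) ∈ 𝔭)
    (hunram : Ideal.ramificationIdx' (Ideal.span {(p : ℤ)}) 𝔭 = 1)
    (θ : 𝓞 L) (hθ : θ ∉ 𝔭)
    (r : ℕ) (hr : 0 < r) (hθr : θ ^ r - 1 ∈ 𝔭)
    (hrmin : ∀ s : ℕ, 0 < s → s < r → θ ^ s - 1 ∉ 𝔭)
    (k : ℕ) (hk : 0 < k) (hθk : θ ^ k - 1 ∈ 𝔭) :
    r ∣ k ∧
      (2 < p →
        emultiplicity 𝔭 (Ideal.span {1 - θ ^ k}) =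
          (padicValNat p k : ℕ∞) + emultiplicity 𝔭 (Ideal.span {1 - θ ^ r})) :=
  order_divides_and_lte_general L p hp 𝔭 hprime hbot habove hunram θ r hr hθr hrmin k hk hθk
end

section
/- Let p = 2, L a number field, 𝔭 a prime of L above 2 unramified over 2, θ ∈ L a 𝔭-adic unit, and r the order of θ modulo 𝔭. Then for every positive even integer k with θ^k ≡ 1 (mod 𝔭), one has ν_2(k) = ν_𝔭(1 − θ^k) − ν_𝔭(1 − θ^{2r}) + 1; and for odd k with θ^k ≡ 1 (mod 𝔭), ν_2(k) = ν_𝔭(1 − θ^k) − ν_𝔭(1 − θ^r). -/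
/-!
The order `r` of `θ` modulo `𝔭` is odd, because squaring is injective in characteristic
`2`, and it divides `k`; so everything reduces to powers of `a = θ ^ r ≡ 1 (mod 𝔭)`.
For `1 - a ∈ 𝔭`, an odd power leaves `ν(1 - a)` unchanged, since
`1 - a ^ m = (1 - a) ∑ a ^ i` and the sum is `≡ m ≢ 0 (mod 𝔭)`.
Squaring raises it by exactly one once `1 - a ∈ 𝔭²`: then `1 + a = 2 - (1 - a)` has the
valuation of `2`, which is `1` because `𝔭` is unramified. Since `1 - a ∈ 𝔭` already forces
`1 - a² ∈ 𝔭²`, only the first squaring is irregular; hence `ν(1 - θ ^ (2r))` appears.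
-/

open NumberField

theorem odd_orderOf_of_two_eq_zero {K : Type*} [CommRing K] [IsReduced K] (h2 : (2 : K) = 0)
    {x : K} (hx : 0 < orderOf x) : Odd (orderOf x) := by
  refine (Nat.even_or_odd _).resolve_left ?_
  rintro ⟨u, hu⟩
  have hxu2 : x ^ u * x ^ u = 1 := by rw [← pow_add, ← hu, pow_orderOf_eq_one]
  have hxu : x ^ u = 1 := by
    have hsq : (x ^ u - 1) ^ 2 = 0 := by
      linear_combination hxu2 - (x ^ u - 1) * h2
    exact sub_eq_zero.1 (IsReduced.eq_zero _ ⟨2, hsq⟩)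
  have := orderOf_le_of_pow_eq_one (by omega) hxu
  omega

namespace Ideal

section CommRing

variable {R : Type*} [CommRing R] {𝔭 : Ideal R}

theorem natCast_notMem_of_odd (h𝔭 : 𝔭 ≠ ⊤) (h2 : (2 : R) ∈ 𝔭) {m : ℕ}
    (hm : Odd m) : (m : R) ∉ 𝔭 := by
  obtain ⟨u, rfl⟩ := hm
  intro hmem
  have h1 : (1 : R) ∈ 𝔭 := by
    simpa using 𝔭.sub_mem hmem (𝔭.mul_mem_right (u : R) h2)
  exact h𝔭 ((eq_top_iff_one 𝔭).2 h1)

theorem geom_sum_sub_natCast_mem {a : R} (ha : 1 - a ∈ 𝔭) (m : ℕ) :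
    ∑ i ∈ Finset.range m, a ^ i - m ∈ 𝔭 := by
  have ha' : Quotient.mk 𝔭 a = 1 := Quotient.eq.2 (by simpa using 𝔭.neg_mem ha)
  rw [← Quotient.eq_zero_iff_mem]
  simp [ha']

theorem one_add_mem_of_one_sub_mem (h2 : (2 : R) ∈ 𝔭) {a : R} (ha : 1 - a ∈ 𝔭) :
    1 + a ∈ 𝔭 := by
  rw [show 1 + a = 2 - (1 - a) by ring]
  exact 𝔭.sub_mem h2 ha

theorem one_sub_sq_mem_sq (h2 : (2 : R) ∈ 𝔭) {a : R} (ha : 1 - a ∈ 𝔭) :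
    1 - a ^ 2 ∈ 𝔭 ^ 2 := by
  rw [show 1 - a ^ 2 = (1 - a) * (1 + a) by ring, sq]
  exact mul_mem_mul ha (one_add_mem_of_one_sub_mem h2 ha)

end CommRing

theorem algebraMap_notMem_sq_of_ramificationIdx'_eq_one {R S : Type*} [CommRing R]
    [CommRing S] [Algebra R S] {P : Ideal S} {a : R} (ha : algebraMap R S a ∈ P)
    (h : ramificationIdx' (span {a}) P = 1) : algebraMap R S a ∉ P ^ 2 := by
  have hmap : map (algebraMap R S) (span {a}) = span {algebraMap R S a} := by
    simp [map_span]
  intro ha2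
  refine (ramificationIdx'_ne_one_iff ?_).2 ?_ h
  · rwa [hmap, span_singleton_le_iff_mem]
  · rwa [hmap, span_singleton_le_iff_mem]

section DedekindDomain

variable {R : Type*} [CommRing R] [IsDedekindDomain R] {𝔭 : Ideal R}

theorem emultiplicity_span_singleton_mul (hP : Prime 𝔭) (x y : R) :
    emultiplicity 𝔭 (span {x * y}) =
      emultiplicity 𝔭 (span {x}) + emultiplicity 𝔭 (span {y}) := by
  rw [← span_singleton_mul_span_singleton, emultiplicity_mul hP]

theorem emultiplicity_span_singleton_eq_zero {x : R} (hx : x ∉ 𝔭) :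
    emultiplicity 𝔭 (span {x}) = 0 := by
  rwa [emultiplicity_eq_zero, dvd_iff_le, span_singleton_le_iff_mem]

theorem emultiplicity_span_singleton_eq_one {x : R} (hx : x ∈ 𝔭) (hx2 : x ∉ 𝔭 ^ 2) :
    emultiplicity 𝔭 (span {x}) = 1 := by
  rw [← Nat.cast_one, emultiplicity_eq_coe, dvd_iff_le, dvd_iff_le,
    span_singleton_le_iff_mem, span_singleton_le_iff_mem, pow_one]
  exact ⟨hx, hx2⟩

theorem emultiplicity_one_sub_pow_of_natCast_notMem (hP : Prime 𝔭) {a : R} (ha : 1 - a ∈ 𝔭)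
    {m : ℕ} (hm : (m : R) ∉ 𝔭) :
    emultiplicity 𝔭 (span {1 - a ^ m}) = emultiplicity 𝔭 (span {1 - a}) := by
  have hsum : ∑ i ∈ Finset.range m, a ^ i ∉ 𝔭 := fun h ↦
    hm (by simpa using 𝔭.sub_mem h (geom_sum_sub_natCast_mem ha m))
  rw [← geom_sum_mul_neg, emultiplicity_span_singleton_mul hP,
    emultiplicity_span_singleton_eq_zero hsum, zero_add]

theorem emultiplicity_one_sub_pow_of_odd (hP : Prime 𝔭) (h2 : (2 : R) ∈ 𝔭) {a : R}
    (ha : 1 - a ∈ 𝔭) {m : ℕ} (hm : Odd m) :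
    emultiplicity 𝔭 (span {1 - a ^ m}) = emultiplicity 𝔭 (span {1 - a}) :=
  emultiplicity_one_sub_pow_of_natCast_notMem hP ha
    (natCast_notMem_of_odd (isPrime_of_prime hP).ne_top h2 hm)

theorem emultiplicity_one_sub_sq (hP : Prime 𝔭) (h2 : (2 : R) ∈ 𝔭)
    (h2' : (2 : R) ∉ 𝔭 ^ 2) {a : R} (ha : 1 - a ∈ 𝔭 ^ 2) :
    emultiplicity 𝔭 (span {1 - a ^ 2}) = emultiplicity 𝔭 (span {1 - a}) + 1 := by
  have h1a : 1 + a ∉ 𝔭 ^ 2 := fun h ↦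
    h2' (by simpa [one_add_one_eq_two] using add_mem h ha)
  rw [show 1 - a ^ 2 = (1 - a) * (1 + a) by ring, emultiplicity_span_singleton_mul hP,
    emultiplicity_span_singleton_eq_one
      (one_add_mem_of_one_sub_mem h2 (pow_le_self two_ne_zero ha)) h1a]

theorem emultiplicity_one_sub_pow_two_pow (hP : Prime 𝔭) (h2 : (2 : R) ∈ 𝔭)
    (h2' : (2 : R) ∉ 𝔭 ^ 2) {a : R} (ha : 1 - a ∈ 𝔭) (s : ℕ) :
    emultiplicity 𝔭 (span {1 - a ^ 2 ^ (s + 1)}) =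
      emultiplicity 𝔭 (span {1 - a ^ 2}) + s := by
  induction s with
  | zero => simp
  | succ s ih =>
    have hmem : 1 - a ^ 2 ^ (s + 1) ∈ 𝔭 ^ 2 := by
      rw [pow_succ 2 s, pow_mul]
      exact one_sub_sq_mem_sq h2 (𝔭.mem_of_dvd (one_sub_dvd_one_sub_pow a _) ha)
    rw [pow_succ 2 (s + 1), pow_mul, emultiplicity_one_sub_sq hP h2 h2' hmem, ih]
    push_cast
    ring

theorem emultiplicity_one_sub_pow_add_one_of_even (hP : Prime 𝔭) (h2 : (2 : R) ∈ 𝔭)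
    (h2' : (2 : R) ∉ 𝔭 ^ 2) {a : R} (ha : 1 - a ∈ 𝔭) {n : ℕ} (hn : n ≠ 0)
    (he : Even n) :
    emultiplicity 𝔭 (span {1 - a ^ n}) + 1 =
      (padicValNat 2 n : ℕ∞) + emultiplicity 𝔭 (span {1 - a ^ 2}) := by
  obtain ⟨s, t, ht, rfl⟩ := Nat.exists_eq_two_pow_mul_odd hn
  obtain ⟨s, rfl⟩ : ∃ s', s = s' + 1 := Nat.exists_eq_add_one.2 <| Nat.pos_of_ne_zero <| by
    rintro rfl
    exact Nat.not_even_iff_odd.2 ht (by simpa using he)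
  have hval : padicValNat 2 (2 ^ (s + 1) * t) = s + 1 := by
    rw [padicValNat.mul (by positivity) ht.pos.ne', padicValNat.prime_pow,
      padicValNat.eq_zero_of_not_dvd ht.not_two_dvd_nat, add_zero]
  have hodd : emultiplicity 𝔭 (span {1 - (a ^ t) ^ 2}) =
      emultiplicity 𝔭 (span {1 - a ^ 2}) := by
    rw [← pow_mul, mul_comm, pow_mul]
    exact emultiplicity_one_sub_pow_of_odd hP h2
      (pow_le_self two_ne_zero (one_sub_sq_mem_sq h2 ha)) ht
  rw [hval, mul_comm, pow_mul, emultiplicity_one_sub_pow_two_pow hP h2 h2'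
    (𝔭.mem_of_dvd (one_sub_dvd_one_sub_pow a t) ha), hodd]
  push_cast
  ring

end DedekindDomain

end Ideal

theorem lte_at_two_general (L : Type*) [Field L] [NumberField L]
    (𝔭 : Ideal (𝓞 L)) (hprime : 𝔭.IsPrime) (hbot : 𝔭 ≠ ⊥)
    (habove : ((2 : ℕ) : 𝓞 L) ∈ 𝔭)
    (hunram : Ideal.ramificationIdx' (Ideal.span {(2 : ℤ)}) 𝔭 = 1)
    (θ : 𝓞 L)
    (r : ℕ) (hr : 0 < r) (hθr : θ ^ r - 1 ∈ 𝔭)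
    (hrmin : ∀ s : ℕ, 0 < s → s < r → θ ^ s - 1 ∉ 𝔭)
    (k : ℕ) (hk : 0 < k) (hθk : θ ^ k - 1 ∈ 𝔭) :
    (Even k →
      emultiplicity 𝔭 (Ideal.span {1 - θ ^ k}) + 1 =
        (padicValNat 2 k : ℕ∞) + emultiplicity 𝔭 (Ideal.span {1 - θ ^ (2 * r)})) ∧
    (Odd k →
      emultiplicity 𝔭 (Ideal.span {1 - θ ^ k}) =
        (padicValNat 2 k : ℕ∞) + emultiplicity 𝔭 (Ideal.span {1 - θ ^ r})) := by
  have hP : Prime 𝔭 := Ideal.prime_of_isPrime hbot hprime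
  have h2 : (2 : 𝓞 L) ∈ 𝔭 := by exact_mod_cast habove
  have h2' : (2 : 𝓞 L) ∉ 𝔭 ^ 2 := by
    simpa using Ideal.algebraMap_notMem_sq_of_ramificationIdx'_eq_one (by simpa using h2) hunram
  have hpow (n : ℕ) : θ ^ n - 1 ∈ 𝔭 ↔ Ideal.Quotient.mk 𝔭 θ ^ n = 1 := by
    rw [← map_pow, ← map_one (Ideal.Quotient.mk 𝔭), Ideal.Quotient.eq]
  have hord : orderOf (Ideal.Quotient.mk 𝔭 θ) = r :=
    (orderOf_eq_iff hr).2 ⟨(hpow r).1 hθr, fun s hs hs0 ↦ (hpow s).not.1 (hrmin s hs0 hs)⟩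
  have hr_odd : Odd r := hord ▸ odd_orderOf_of_two_eq_zero
    (map_ofNat (Ideal.Quotient.mk 𝔭) 2 ▸ Ideal.Quotient.eq_zero_iff_mem.2 h2) (hord ▸ hr)
  obtain ⟨c, rfl⟩ : r ∣ k := hord ▸ orderOf_dvd_of_pow_eq_one ((hpow k).1 hθk)
  have hc0 : c ≠ 0 := by
    rintro rfl
    simp at hk
  have ha : 1 - θ ^ r ∈ 𝔭 := by simpa using 𝔭.neg_mem hθr
  rw [pow_mul]
  refine ⟨fun he ↦ ?_, fun ho ↦ ?_⟩
  · have hc : Even c := (Nat.even_mul.1 he).resolve_left (Nat.not_even_iff_odd.2 hr_odd)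
    rw [padicValNat.mul hr.ne' hc0, padicValNat.eq_zero_of_not_dvd hr_odd.not_two_dvd_nat,
      zero_add, mul_comm 2 r, pow_mul]
    exact Ideal.emultiplicity_one_sub_pow_add_one_of_even hP h2 h2' ha hc0 hc
  · rw [padicValNat.eq_zero_of_not_dvd ho.not_two_dvd_nat, Nat.cast_zero, zero_add]
    exact Ideal.emultiplicity_one_sub_pow_of_odd hP h2 ha (Nat.odd_mul.1 ho).2

/-- Lifting-the-exponent at `p = 2` for the order of `θ` modulo an unramified prime `𝔭`
above `2`: for even `k` with `θ^k ≡ 1 (mod 𝔭)`,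
`ν_2(k) = ν_𝔭(1 − θ^k) − ν_𝔭(1 − θ^{2r}) + 1`, and for odd such `k`,
`ν_2(k) = ν_𝔭(1 − θ^k) − ν_𝔭(1 − θ^r)`. -/
theorem lte_at_two (L : Type*) [Field L] [NumberField L]
    (𝔭 : Ideal (𝓞 L)) (hprime : 𝔭.IsPrime) (hbot : 𝔭 ≠ ⊥)
    (habove : ((2 : ℕ) : 𝓞 L) ∈ 𝔭)
    (hunram : Ideal.ramificationIdx' (Ideal.span {(2 : ℤ)}) 𝔭 = 1)
    (θ : 𝓞 L) (hθ : θ ∉ 𝔭)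
    (r : ℕ) (hr : 0 < r) (hθr : θ ^ r - 1 ∈ 𝔭)
    (hrmin : ∀ s : ℕ, 0 < s → s < r → θ ^ s - 1 ∉ 𝔭)
    (k : ℕ) (hk : 0 < k) (hθk : θ ^ k - 1 ∈ 𝔭) :
    (Even k →
      emultiplicity 𝔭 (Ideal.span {1 - θ ^ k}) + 1 =
        (padicValNat 2 k : ℕ∞) + emultiplicity 𝔭 (Ideal.span {1 - θ ^ (2 * r)})) ∧
    (Odd k →
      emultiplicity 𝔭 (Ideal.span {1 - θ ^ k}) =
        (padicValNat 2 k : ℕ∞) + emultiplicity 𝔭 (Ideal.span {1 - θ ^ r})) :=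
  lte_at_two_general L 𝔭 hprime hbot habove hunram θ r hr hθr hrmin k hk hθk
end

section
/- Let F(t) = t³ + a t² + b t + c ∈ ℤ[t] and suppose F divides a trinomial t^m + A t^n + B ∈ ℚ[t] with m > n > 0 and B ≠ 0. If p is a prime with p ∣ c but p ∤ b, and x₀, x₁, x₂ are the (distinct) roots of F in its splitting field L, then each root xᵢ is divisible by some prime of L above p, and these primes can be taken pairwise distinct (i.e. p splits into at least 3 distinct primes in L). -/
open Polynomial NumberField IntermediateField

lemma exists_maximal_mem_of_dvd_card {S : Type*} [CommRing S] (I : Ideal S) (p : ℕ)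
    (hp : p.Prime) (hcard : p ∣ Nat.card (S ⧸ I)) (hne : Nat.card (S ⧸ I) ≠ 0) :
    ∃ P : Ideal S, P.IsMaximal ∧ I ≤ P ∧ (p : S) ∈ P := by
  have hfin : Finite (S ⧸ I) := Nat.finite_of_card_ne_zero hne
  cases nonempty_fintype (S ⧸ I)
  haveI : Fact p.Prime := ⟨hp⟩
  obtain ⟨g, hg⟩ := exists_prime_addOrderOf_dvd_card (G := S ⧸ I) p
    (by rwa [← Nat.card_eq_fintype_card])
  obtain ⟨y, rfl⟩ := Ideal.Quotient.mk_surjective g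
  have hy : y ∉ I := by
    intro h
    rw [(Ideal.Quotient.eq_zero_iff_mem).mpr h] at hg
    simp only [addOrderOf_zero] at hg
    exact hp.one_lt.ne' hg.symm
  have hpy : (p : S) * y ∈ I := by
    have h0 : (p : ℕ) • (Ideal.Quotient.mk I y) = 0 := by
      rw [← hg]; exact addOrderOf_nsmul_eq_zero _
    rwa [nsmul_eq_mul, ← map_natCast (Ideal.Quotient.mk I), ← map_mul,
      Ideal.Quotient.eq_zero_iff_mem] at h0
  have hKtop : I.colon (Ideal.span {y}) ≠ ⊤ := by
    intro h
    apply hy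
    have h1 : (1 : S) ∈ I.colon (Ideal.span {y}) := h ▸ Submodule.mem_top
    rw [Ideal.mem_colon_span_singleton, one_mul] at h1
    exact h1
  obtain ⟨P, hPmax, hKP⟩ := Ideal.exists_le_maximal _ hKtop
  exact ⟨P, hPmax, fun z hz => hKP (Ideal.mem_colon_span_singleton.mpr (I.mul_mem_right y hz)),
    hKP (Ideal.mem_colon_span_singleton.mpr hpy)⟩

/-- If the cubic `F = t³ + a t² + b t + c ∈ ℤ[t]` is irreducible over `ℚ` and divides a
rational trinomial, `p` is a prime with `p ∣ c` but `p ∤ b`, and `x₀, x₁, x₂` are the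
distinct roots of `F` in its splitting field `L`, then there are three pairwise distinct
primes of `L` above `p`, the `i`-th containing `xᵢ`. -/
theorem cubic_roots_in_distinct_primes
    (a b c : ℤ) (F : Polynomial ℤ)
    (hF : F = X ^ 3 + C a * X ^ 2 + C b * X + C c)
    (hirr : Irreducible (F.map (Int.castRingHom ℚ)))
    (m n : ℕ) (A B : ℚ) (hmn : n < m) (hn : 0 < n) (hB : B ≠ 0)
    (hdvd : F.map (Int.castRingHom ℚ) ∣ (X ^ m + C A * X ^ n + C B : Polynomial ℚ))
    (p : ℕ) (hp : p.Prime) (hpc : (p : ℤ) ∣ c) (hpb : ¬ (p : ℤ) ∣ b)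
    (L : Type*) [Field L] [NumberField L] [Algebra ℚ L]
    [Polynomial.IsSplittingField ℚ L (F.map (Int.castRingHom ℚ))]
    (x₀ x₁ x₂ : 𝓞 L)
    (hdist : x₀ ≠ x₁ ∧ x₀ ≠ x₂ ∧ x₁ ≠ x₂)
    (hroots : F.map (Int.castRingHom (𝓞 L)) = (X - C x₀) * (X - C x₁) * (X - C x₂)) :
    ∃ P₀ P₁ P₂ : Ideal (𝓞 L),
      P₀.IsPrime ∧ P₁.IsPrime ∧ P₂.IsPrime ∧
      P₀ ≠ ⊥ ∧ P₁ ≠ ⊥ ∧ P₂ ≠ ⊥ ∧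
      P₀ ≠ P₁ ∧ P₀ ≠ P₂ ∧ P₁ ≠ P₂ ∧
      ((p : 𝓞 L) ∈ P₀ ∧ (p : 𝓞 L) ∈ P₁ ∧ (p : 𝓞 L) ∈ P₂) ∧
      x₀ ∈ P₀ ∧ x₁ ∈ P₁ ∧ x₂ ∈ P₂ := by
  obtain rfl : ‹Algebra ℚ L› = DivisionRing.toRatAlgebra := Subsingleton.elim _ _
  -- coefficient identities in 𝓞 L
  have hFO : F.map (Int.castRingHom (𝓞 L))
      = X ^ 3 + C (a : 𝓞 L) * X ^ 2 + C (b : 𝓞 L) * X + C (c : 𝓞 L) := by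
    simp [hF]
  have key : (X ^ 3 + C (a : 𝓞 L) * X ^ 2 + C (b : 𝓞 L) * X + C (c : 𝓞 L) : (𝓞 L)[X])
      = X ^ 3 - C (x₀ + x₁ + x₂) * X ^ 2 + C (x₀ * x₁ + x₀ * x₂ + x₁ * x₂) * X
        - C (x₀ * x₁ * x₂) := by
    rw [← hFO, hroots]; simp only [map_add, map_mul]; ring
  have hb3 : (b : 𝓞 L) = x₀ * x₁ + x₀ * x₂ + x₁ * x₂ := by
    have h := congrArg (fun q => Polynomial.coeff q 1) key
    simp only [coeff_add, coeff_sub, coeff_C_mul, coeff_X_pow, coeff_C, coeff_X] at h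
    norm_num at h
    exact h
  have hc3 : (c : 𝓞 L) = -(x₀ * x₁ * x₂) := by
    have h := congrArg (fun q => Polynomial.coeff q 0) key
    simp only [coeff_add, coeff_sub, coeff_C_mul, coeff_X_pow, coeff_C, coeff_X] at h
    norm_num at h
    exact h
  -- facts about F over ℚ
  have hFQ : F.map (Int.castRingHom ℚ)
      = X ^ 3 + C (a : ℚ) * X ^ 2 + C (b : ℚ) * X + C (c : ℚ) := by
    simp [hF]
  have hdeg : (F.map (Int.castRingHom ℚ)).natDegree = 3 := by
    rw [hFQ]; compute_degree!
  have hmon : (F.map (Int.castRingHom ℚ)).Monic := by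
    rw [hFQ]; monicity!
  have hcoe0 : (F.map (Int.castRingHom ℚ)).coeff 0 = (c : ℚ) := by
    rw [hFQ]
    simp only [coeff_add, coeff_C_mul, coeff_X_pow, coeff_C, coeff_X]
    norm_num
  have hc0 : c ≠ 0 := by
    intro h
    have hroot : (F.map (Int.castRingHom ℚ)).IsRoot 0 := by
      simp [IsRoot, hFQ, h]
    have hd1 := Polynomial.degree_eq_one_of_irreducible_of_root hirr hroot
    rw [Polynomial.degree_eq_natDegree hmon.ne_zero, hdeg] at hd1
    norm_num at hd1
  -- For each root, find a maximal ideal containing it and p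
  have haev : ∀ x : 𝓞 L, Polynomial.eval x (F.map (Int.castRingHom (𝓞 L))) = 0 →
      ∃ P : Ideal (𝓞 L), P.IsMaximal ∧ (p : 𝓞 L) ∈ P ∧ x ∈ P := by
    intro x hx
    have h1 : Polynomial.aeval x F = 0 := by
      rw [Polynomial.eval_map] at hx
      rwa [Polynomial.aeval_def, algebraMap_int_eq]
    have h2 : Polynomial.aeval (algebraMap (𝓞 L) L x) F = 0 := by
      rw [Polynomial.aeval_algebraMap_apply, h1, map_zero]
    have h3 : Polynomial.aeval (algebraMap (𝓞 L) L x) (F.map (Int.castRingHom ℚ)) = 0 := by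
      rw [← algebraMap_int_eq, Polynomial.aeval_map_algebraMap]
      exact h2
    have hmin : minpoly ℚ (algebraMap (𝓞 L) L x) = F.map (Int.castRingHom ℚ) :=
      (minpoly.eq_of_irreducible_of_monic hirr h3 hmon).symm
    set xL := algebraMap (𝓞 L) L x with hxL
    have hint : IsIntegral ℚ xL := IsIntegral.of_finite ℚ xL
    haveI : FiniteDimensional ℚ⟮xL⟯ L := FiniteDimensional.right ℚ ℚ⟮xL⟯ L
    have hnorm : Algebra.norm ℚ xL = (-(c : ℚ)) ^ Module.finrank ℚ⟮xL⟯ L := by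
      rw [Algebra.norm_eq_norm_adjoin ℚ xL]
      congr 1
      have hpb2 := Algebra.PowerBasis.norm_gen_eq_coeff_zero_minpoly
        (IntermediateField.adjoin.powerBasis hint)
      rw [IntermediateField.adjoin.powerBasis_gen] at hpb2
      rw [hpb2, IntermediateField.minpoly_gen, hmin, hcoe0,
        IntermediateField.adjoin.powerBasis_dim, hmin, hdeg]
      ring
    have hZnorm : Algebra.norm ℤ x = (-c) ^ Module.finrank ℚ⟮xL⟯ L := by
      have hco := Algebra.coe_norm_int x
      rw [RingOfIntegers.coe_eq_algebraMap, ← hxL, hnorm] at hco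
      exact_mod_cast hco
    have hfpos : 0 < Module.finrank ℚ⟮xL⟯ L := Module.finrank_pos
    have hpnorm : (p : ℤ) ∣ Algebra.norm ℤ x := by
      rw [hZnorm]
      exact dvd_pow ((dvd_neg).mpr hpc) hfpos.ne'
    have hcardeq : Nat.card (𝓞 L ⧸ Ideal.span {x}) = Ideal.absNorm (Ideal.span {x}) :=
      (Submodule.cardQuot_apply _).symm
    have hcard : p ∣ Nat.card (𝓞 L ⧸ Ideal.span {x}) := by
      rw [hcardeq, Ideal.absNorm_span_singleton]
      have := Int.natAbs_dvd_natAbs.mpr hpnorm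
      simpa using this
    have hne : Nat.card (𝓞 L ⧸ Ideal.span {x}) ≠ 0 := by
      rw [hcardeq, Ideal.absNorm_span_singleton, hZnorm]
      simp [hc0, hfpos.ne', pow_eq_zero_iff]
    obtain ⟨P, hPmax, hle, hpP⟩ := exists_maximal_mem_of_dvd_card _ p hp hcard hne
    exact ⟨P, hPmax, hpP, hle (Ideal.mem_span_singleton_self x)⟩
  obtain ⟨P₀, h0max, h0p, h0x⟩ := haev x₀ (by rw [hroots]; simp)
  obtain ⟨P₁, h1max, h1p, h1x⟩ := haev x₁ (by rw [hroots]; simp)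
  obtain ⟨P₂, h2max, h2p, h2x⟩ := haev x₂ (by rw [hroots]; simp)
  -- no maximal ideal can contain p together with two of the roots
  have hcop : IsCoprime (p : ℤ) b := by
    rw [Int.isCoprime_iff_gcd_eq_one]
    have hnd : ¬ p ∣ b.natAbs := fun h => by
      have h2 : (p : ℤ) ∣ (b.natAbs : ℤ) := Int.natCast_dvd_natCast.mpr h
      exact hpb (h2.trans (Int.natAbs_dvd.mpr dvd_rfl))
    have hcp := (Nat.Prime.coprime_iff_not_dvd hp).mpr hnd
    unfold Int.gcd
    simpa [Int.natAbs_natCast] using hcp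
  have hbP : ∀ P : Ideal (𝓞 L), P.IsMaximal → (p : 𝓞 L) ∈ P → (b : 𝓞 L) ∈ P → False := by
    intro P hPm hpP hbP
    obtain ⟨u, v, huv⟩ := hcop
    have h1 : (1 : 𝓞 L) ∈ P := by
      have hm := P.add_mem (P.mul_mem_left ((u : ℤ) : 𝓞 L) hpP)
        (P.mul_mem_left ((v : ℤ) : 𝓞 L) hbP)
      have hcast : ((u : ℤ) : 𝓞 L) * ((p : ℕ) : 𝓞 L) + ((v : ℤ) : 𝓞 L) * ((b : ℤ) : 𝓞 L)
          = 1 := by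
        have := congrArg (fun z : ℤ => (z : 𝓞 L)) huv
        push_cast at this ⊢
        convert this using 2
      rwa [hcast] at hm
    exact hPm.ne_top ((Ideal.eq_top_iff_one P).mpr h1)
  have hpair01 : x₀ ∈ P₀ → x₁ ∈ P₀ → False := fun h0 h1 =>
    hbP P₀ h0max h0p (by
      rw [hb3]
      exact P₀.add_mem (P₀.add_mem (P₀.mul_mem_right _ h0) (P₀.mul_mem_right _ h0))
        (P₀.mul_mem_right _ h1))
  have hpair02 : x₀ ∈ P₀ → x₂ ∈ P₀ → False := fun h0 h2 =>
    hbP P₀ h0max h0p (by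
      rw [hb3]
      exact P₀.add_mem (P₀.add_mem (P₀.mul_mem_right _ h0) (P₀.mul_mem_right _ h0))
        (P₀.mul_mem_left _ h2))
  have hpair12' : ∀ P : Ideal (𝓞 L), P.IsMaximal → (p : 𝓞 L) ∈ P → x₁ ∈ P → x₂ ∈ P → False :=
    fun P hPm hpP h1 h2 =>
    hbP P hPm hpP (by
      rw [hb3]
      exact P.add_mem (P.add_mem (P.mul_mem_left _ h1) (P.mul_mem_left _ h2))
        (P.mul_mem_right _ h1))
  have hbot : ∀ P : Ideal (𝓞 L), (p : 𝓞 L) ∈ P → P ≠ ⊥ := by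
    intro P hpP h
    rw [h, Ideal.mem_bot] at hpP
    exact (Nat.cast_ne_zero.mpr hp.ne_zero) hpP
  refine ⟨P₀, P₁, P₂, h0max.isPrime, h1max.isPrime, h2max.isPrime,
    hbot P₀ h0p, hbot P₁ h1p, hbot P₂ h2p, ?_, ?_, ?_, ⟨h0p, h1p, h2p⟩, h0x, h1x, h2x⟩
  · intro h; exact hpair01 h0x (h ▸ h1x)
  · intro h; exact hpair02 h0x (h ▸ h2x)
  · intro h; exact hpair12' P₁ h1max h1p h1x (h ▸ h2x)
end

section
/- If Δ < 0 is a discriminant (Δ ≡ 0 or 1 mod 4), a is a positive integer coprime to Δ such that Δ is a square modulo 4a and |Δ| ≥ 4a², then there exist integers b, c with b² − 4ac = Δ, gcd(a,b,c) = 1, and either −a < b ≤ a < c or 0 ≤ b ≤ a = c. -/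
/-- If `Δ < 0` is a discriminant, `a > 0` is coprime to `Δ`, `Δ` is a square mod `4a`,
and `|Δ| ≥ 4a²`, then `a` is suitable for `Δ`: there is a reduced form `(a, b, c)`
of discriminant `Δ`. -/
theorem suitable_of_square_mod (Δ a : ℤ)
    (hΔneg : Δ < 0) (hdisc : Δ % 4 = 0 ∨ Δ % 4 = 1)
    (ha : 0 < a) (hcop : IsCoprime a Δ)
    (hsq : ∃ b : ℤ, b ^ 2 ≡ Δ [ZMOD 4 * a])
    (hbig : 4 * a ^ 2 ≤ |Δ|) :
    ∃ b c : ℤ, b ^ 2 - 4 * a * c = Δ ∧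
      Int.gcd a (Int.gcd b c) = 1 ∧
      ((-a < b ∧ b ≤ a ∧ a < c) ∨ (0 ≤ b ∧ b ≤ a ∧ a = c)) := by
  obtain ⟨b₀, hb₀⟩ := hsq
  have h2a : (0:ℤ) < 2 * a := by linarith
  -- choose b ≡ b₀ [mod 2a] with -a < b ≤ a
  set r : ℤ := (b₀ + a - 1) % (2 * a) with hr
  have hr0 : 0 ≤ r := Int.emod_nonneg _ (by positivity)
  have hrlt : r < 2 * a := Int.emod_lt_of_pos _ h2a
  set b : ℤ := r - a + 1 with hb
  have hbrange : -a < b ∧ b ≤ a := by constructor <;> simp [hb] <;> omega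
  -- b ≡ b₀ mod 2a
  have hmod : (2 * a) ∣ (b - b₀) := by
    have : (2 * a) ∣ ((b₀ + a - 1) - r) := Int.dvd_self_sub_of_emod_eq rfl
    have heq : b - b₀ = -((b₀ + a - 1) - r) := by rw [hb]; ring
    rw [heq]; exact dvd_neg.2 this
  obtain ⟨k, hk⟩ := hmod
  have hbb0 : b = b₀ + 2 * a * k := by linarith
  -- 4a ∣ b² - Δ
  have hdvd : (4 * a) ∣ (b ^ 2 - Δ) := by
    have h1 : (4 * a) ∣ (b₀ ^ 2 - Δ) := Int.ModEq.dvd hb₀.symm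
    have : b ^ 2 - Δ = (b₀ ^ 2 - Δ) + 4 * a * (k * b₀ + a * k ^ 2) := by
      rw [hbb0]; ring
    rw [this]
    exact dvd_add h1 ⟨k * b₀ + a * k ^ 2, rfl⟩
  obtain ⟨c, hc⟩ := hdvd
  have hkey : b ^ 2 - 4 * a * c = Δ := by linarith
  have habs : |Δ| = -Δ := abs_of_neg hΔneg
  have hca : a ≤ c := by
    have h1 : 4 * a * c = b ^ 2 - Δ := by linarith
    have h2 : 4 * a * a ≤ 4 * a * c := by nlinarith [sq_nonneg b]
    exact le_of_mul_le_mul_left h2 (by linarith)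
  -- gcd lemma, for any b' with b'^2 - 4ac = Δ
  have hgcd : ∀ b' : ℤ, b' ^ 2 - 4 * a * c = Δ → Int.gcd a (Int.gcd b' c) = 1 := by
    intro b' hb'
    set g : ℕ := Int.gcd a (Int.gcd b' c) with hg
    have hga : (g:ℤ) ∣ a := Int.gcd_dvd_left ..
    have hgb : (g:ℤ) ∣ b' := dvd_trans (Int.gcd_dvd_right ..) (Int.gcd_dvd_left ..)
    have hgΔ : (g:ℤ) ∣ Δ := by
      have : (g:ℤ) ∣ b' ^ 2 - 4 * a * c :=
        dvd_sub (dvd_pow hgb (by norm_num)) (Dvd.dvd.mul_right (Dvd.dvd.mul_left hga 4) c)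
      rwa [hb'] at this
    have := hcop.isUnit_of_dvd' hga hgΔ
    rw [Int.isUnit_iff] at this
    omega
  by_cases hac : a = c
  · -- c = a case: flip sign of b if needed
    by_cases hbpos : 0 ≤ b
    · exact ⟨b, c, hkey, hgcd b hkey, Or.inr ⟨hbpos, hbrange.2, hac⟩⟩
    · refine ⟨-b, c, by rw [neg_pow]; simpa using hkey, ?_, Or.inr ⟨by omega, by omega, hac⟩⟩
      simpa [Int.neg_gcd] using hgcd b hkey
  · exact ⟨b, c, hkey, hgcd b hkey, Or.inl ⟨hbrange.1, hbrange.2, lt_of_le_of_ne hca hac⟩⟩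
end

section
/- Let Δ < 0 be an odd discriminant of the form Δ = −a·a′ where a, a′ are coprime positive odd integers with a ≤ a′. If a′ ≥ 3a then (a, a, (a+a′)/4) is a reduced form of discriminant Δ; if a ≤ a′ ≤ 3a then ((a+a′)/4, (a′−a)/2, (a+a′)/4) is a reduced form of discriminant Δ. In particular min{a, a′, (a+a′)/4} is suitable for Δ. -/
/-- A triple `(A, B, C)` is a reduced form of discriminant `Δ` if `gcd(A,B,C) = 1`,
`B² − 4AC = Δ`, and either `−A < B ≤ A < C` or `0 ≤ B ≤ A = C`. -/
def IsReducedForm (Δ A B C : ℤ) : Prop :=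
  Int.gcd A (Int.gcd B C) = 1 ∧ B ^ 2 - 4 * A * C = Δ ∧
    ((-A < B ∧ B ≤ A ∧ A < C) ∨ (0 ≤ B ∧ B ≤ A ∧ A = C))

/-- For an odd discriminant `Δ = −a a′` with `a, a′` coprime positive odd integers,
`a ≤ a′`: if `a′ ≥ 3a` then `(a, a, (a+a′)/4)` is a reduced form of discriminant `Δ`;
if `a′ ≤ 3a` then `((a+a′)/4, (a′−a)/2, (a+a′)/4)` is; in particular
`min {a, a′, (a+a′)/4}` is suitable for `Δ`. -/
theorem suitable_coprime_factorization_odd (Δ a a' : ℤ)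
    (hΔneg : Δ < 0) (hΔodd : Δ % 4 = 1)
    (hfac : Δ = -(a * a'))
    (ha : 0 < a) (ha' : 0 < a') (haodd : Odd a) (ha'odd : Odd a')
    (hcop : IsCoprime a a') (hle : a ≤ a') :
    (3 * a ≤ a' → IsReducedForm Δ a a ((a + a') / 4)) ∧
    (a' ≤ 3 * a → IsReducedForm Δ ((a + a') / 4) ((a' - a) / 2) ((a + a') / 4)) ∧
    (∃ B C : ℤ, IsReducedForm Δ (min a (min a' ((a + a') / 4))) B C) := by
  have ha2 : a % 2 = 1 := Int.odd_iff.mp haodd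
  have ha'2 : a' % 2 = 1 := Int.odd_iff.mp ha'odd
  have hmul : (a * a') % 4 = 3 := by
    obtain ⟨m, hm⟩ : ∃ m, a * a' = m := ⟨_, rfl⟩
    rw [hfac, hm] at hΔodd; rw [hm]; omega
  have h4 : 4 ∣ a + a' := by
    have h1 : a % 4 = 1 ∨ a % 4 = 3 := by omega
    have h1' : a' % 4 = 1 ∨ a' % 4 = 3 := by omega
    have hme := Int.mul_emod a a' 4
    rcases h1 with h1 | h1 <;> rcases h1' with h1' | h1' <;>
      rw [h1, h1'] at hme <;> omega
  obtain ⟨k, hk⟩ := h4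
  have hC : (a + a') / 4 = k := by omega
  have hB : (a' - a) / 2 = 2 * k - a := by omega
  have ha'eq : a' = 4 * k - a := by omega
  obtain ⟨u, v, huv⟩ := hcop
  rw [hC, hB]
  have hcop1 : Int.gcd a (Int.gcd a k) = 1 := by
    have h1 : IsCoprime a k := ⟨u - v, 4 * v, by linear_combination huv - v * hk⟩
    have h2 : Int.gcd a k = 1 := Int.isCoprime_iff_gcd_eq_one.mp h1
    have h3 : IsCoprime a (1 : ℤ) := isCoprime_one_right
    rw [h2]
    simpa using Int.isCoprime_iff_gcd_eq_one.mp h3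
  have hcop2 : Int.gcd k (Int.gcd (2 * k - a) k) = 1 := by
    have h1 : IsCoprime (2 * k - a) k := by
      refine ⟨v - u, 2 * u + 2 * v, ?_⟩
      linear_combination huv - v * hk
    have h2 : Int.gcd (2 * k - a) k = 1 := Int.isCoprime_iff_gcd_eq_one.mp h1
    rw [h2]
    simpa using Int.isCoprime_iff_gcd_eq_one.mp (isCoprime_one_right : IsCoprime k (1:ℤ))
  have hdisc1 : a ^ 2 - 4 * a * k = Δ := by rw [hfac, ha'eq]; ring
  have hdisc2 : (2 * k - a) ^ 2 - 4 * k * k = Δ := by rw [hfac, ha'eq]; ring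
  refine ⟨fun h3a => ⟨hcop1, hdisc1, by omega⟩,
    fun h3a => ⟨hcop2, hdisc2, by omega⟩, ?_⟩
  by_cases hcase : a ≤ k
  · have hmin : min a (min a' k) = a := by omega
    rw [hmin]
    exact ⟨a, k, hcop1, hdisc1, by omega⟩
  · have hmin : min a (min a' k) = k := by omega
    rw [hmin]
    exact ⟨2 * k - a, k, hcop2, hdisc2, by omega⟩
end

section
/- If Δ ≡ 4 (mod 32) is a negative discriminant and k ≥ 3 is an integer with |Δ| ≥ 2^{2k+2}, then there exists an integer b with 0 ≤ b ≤ 2^k, ν₂(b) = 1, and Δ ≡ b² (mod 2^{k+2}), such that (2^k, b, (b² − Δ)/2^{k+2}) is a reduced form of discriminant Δ. In particular 2^k is suitable for Δ. -/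
theorem exists_sq_modEq_two_pow {m : ℤ} (hm : m % 8 = 1) {j : ℕ} (hj : 3 ≤ j) :
    ∃ u : ℤ, u ^ 2 ≡ m [ZMOD 2 ^ j] := by
  induction j, hj using Nat.le_induction with
  | base => exact ⟨1, by norm_num [Int.ModEq, hm]⟩
  | succ j hj ih =>
    obtain ⟨i, rfl⟩ : ∃ i, j = i + 3 := ⟨j - 3, by omega⟩
    obtain ⟨u, hu⟩ := ih
    obtain ⟨t, ht⟩ := Int.modEq_iff_dvd.mp hu.symm
    obtain ⟨a, rfl⟩ : Odd u := by
      rcases Int.even_or_odd u with ⟨a, rfl⟩ | hu_odd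
      · have : m = 2 * (2 * a ^ 2 - 2 ^ (i + 2) * t) := by linear_combination -ht
        omega
      · exact hu_odd
    rcases Int.even_or_odd t with ⟨s, rfl⟩ | ⟨s, rfl⟩
    · exact ⟨2 * a + 1, (Int.modEq_iff_dvd.mpr ⟨s, by linear_combination ht⟩).symm⟩
    · -- shifting the root by `2 ^ (i + 2)` absorbs the odd quotient
      refine ⟨2 * a + 1 + 2 ^ (i + 2), (Int.modEq_iff_dvd.mpr ⟨s + a + 1 + 2 ^ i, ?_⟩).symm⟩
      linear_combination ht

theorem sq_modEq_sq_of_modEq {n a b : ℤ} (hn : 2 ∣ n) (h : a ≡ b [ZMOD n]) :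
    a ^ 2 ≡ b ^ 2 [ZMOD 2 * n] := by
  obtain ⟨q, hq⟩ := Int.modEq_iff_dvd.mp h
  obtain ⟨r, rfl⟩ := hn
  exact Int.modEq_iff_dvd.mpr ⟨q * (a + r * q), by linear_combination (b + a + 2 * r * q) * hq⟩

theorem exists_sq_modEq_two_pow_succ_of_two_mul_le {a u : ℤ} {k : ℕ} (hk : 1 ≤ k)
    (hu : u ^ 2 ≡ a [ZMOD 2 ^ (k + 1)]) :
    ∃ v : ℤ, 0 ≤ v ∧ 2 * v ≤ 2 ^ k ∧ v ^ 2 ≡ a [ZMOD 2 ^ (k + 1)] := by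
  have hsq : ∀ x y : ℤ, x ≡ y [ZMOD 2 ^ k] → x ^ 2 ≡ y ^ 2 [ZMOD 2 ^ (k + 1)] := fun x y h =>
    pow_succ' (2 : ℤ) k ▸ sq_modEq_sq_of_modEq (dvd_pow_self 2 (by omega)) h
  have hpos : (0 : ℤ) < 2 ^ k := by positivity
  set r := u % 2 ^ k
  have hr : r ^ 2 ≡ a [ZMOD 2 ^ (k + 1)] := (hsq _ _ (Int.mod_modEq u _)).trans hu
  have hr0 : 0 ≤ r := Int.emod_nonneg u hpos.ne'
  have hrk : r < 2 ^ k := Int.emod_lt_of_pos u hpos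
  by_cases h : 2 * r ≤ 2 ^ k
  · exact ⟨r, hr0, h, hr⟩
  · refine ⟨2 ^ k - r, by omega, by omega, ?_⟩
    have hneg : 2 ^ k - r ≡ -r [ZMOD 2 ^ k] := Int.modEq_iff_dvd.mpr ⟨-1, by ring⟩
    exact (hsq _ _ hneg).trans (by rwa [neg_sq])

theorem isReducedForm_of_isCoprime {A B C : ℤ} (hAC : IsCoprime A C) (hAB : -A < B)
    (hBA : B ≤ A) (hCA : A < C) : IsReducedForm (B ^ 2 - 4 * A * C) A B C :=
  ⟨Int.isCoprime_iff_gcd_eq_one.mp (hAC.of_isCoprime_of_dvd_right (Int.gcd_dvd_right B C)), rfl,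
    Or.inl ⟨hAB, hBA, hCA⟩⟩

theorem exists_odd_sq_sub_eq_two_pow_mul_odd {m : ℤ} (hm : m % 8 = 1) {k : ℕ} (hk : 3 ≤ k) :
    ∃ v c : ℤ, Odd v ∧ Odd c ∧ 0 ≤ v ∧ 2 * v ≤ 2 ^ k ∧ v ^ 2 - m = 2 ^ k * c := by
  have hmk : (m + 2 ^ k) % 8 = 1 := by
    obtain ⟨q, hq⟩ : (2 : ℤ) ^ 3 ∣ 2 ^ k := pow_dvd_pow 2 hk
    omega
  obtain ⟨u, hu⟩ := exists_sq_modEq_two_pow hmk (by omega : 3 ≤ k + 1)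
  obtain ⟨v, hv0, hvk, hv⟩ := exists_sq_modEq_two_pow_succ_of_two_mul_le (by omega) hu
  obtain ⟨t, ht⟩ := Int.modEq_iff_dvd.mp hv.symm
  have hc : v ^ 2 = m + 2 ^ k * (2 * t + 1) := by rw [pow_succ] at ht; linear_combination ht
  have hv_odd : Odd v := by
    refine (Int.odd_pow.mp ?_).resolve_right two_ne_zero
    rw [hc]
    exact (Int.odd_iff.mpr (by omega)).add_even
      ((Int.even_pow.mpr ⟨even_two, by omega⟩).mul_right _)
  exact ⟨v, 2 * t + 1, hv_odd, odd_two_mul_add_one t, hv0, hvk, by linear_combination hc⟩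

/-- If `Δ ≡ 4 (mod 32)` is a negative discriminant and `k ≥ 3` with `|Δ| ≥ 2^{2k+2}`,
then there is an integer `b` with `0 ≤ b ≤ 2^k`, `ν₂(b) = 1`, `Δ ≡ b² (mod 2^{k+2})`,
such that `(2^k, b, (b² − Δ)/2^{k+2})` is a reduced form of discriminant `Δ`;
in particular `2^k` is suitable for `Δ`. -/
theorem suitable_power_of_two (Δ : ℤ) (k : ℕ)
    (hΔneg : Δ < 0) (hΔmod : Δ % 32 = 4)
    (hk : 3 ≤ k) (hbig : (2 : ℤ) ^ (2 * k + 2) ≤ |Δ|) :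
    ∃ b : ℤ, 0 ≤ b ∧ b ≤ 2 ^ k ∧ (2 ∣ b ∧ ¬ (4 ∣ b)) ∧
      Δ ≡ b ^ 2 [ZMOD 2 ^ (k + 2)] ∧
      IsReducedForm Δ (2 ^ k) b ((b ^ 2 - Δ) / 2 ^ (k + 2)) := by
  obtain ⟨m, rfl⟩ : ∃ m, Δ = 4 * m := ⟨Δ / 4, by omega⟩
  obtain ⟨_, c, ⟨w, rfl⟩, hc_odd, hv0, hvk, hc⟩ :=
    exists_odd_sq_sub_eq_two_pow_mul_odd (by omega : m % 8 = 1) hk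
  have hdisc : (2 * (2 * w + 1)) ^ 2 - 4 * m = 2 ^ (k + 2) * c := by
    linear_combination 4 * hc
  have hkc : 2 ^ k < c := by
    have hv1 : 1 ≤ (2 * w + 1) ^ 2 := one_le_pow₀ (by omega)
    have habs : |4 * m| = -(4 * m) := abs_of_neg hΔneg
    have hpow : (2 : ℤ) ^ (2 * k + 2) = 4 * (2 ^ k * 2 ^ k) := by ring
    exact lt_of_mul_lt_mul_left (by linarith) (by positivity : (0 : ℤ) ≤ 2 ^ k)
  refine ⟨2 * (2 * w + 1), by omega, hvk, ⟨dvd_mul_right 2 _, by omega⟩,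
    Int.modEq_iff_dvd.mpr ⟨c, hdisc⟩, ?_⟩
  rw [hdisc, Int.mul_ediv_cancel_left _ (by positivity)]
  convert isReducedForm_of_isCoprime (Int.isCoprime_two_left.mpr hc_odd).pow_left
    (by omega) hvk hkc using 1
  linear_combination -hdisc
end

section
/- Let m be a prime number and χ a real Dirichlet character mod m with χ(p) ≠ 1 for every prime p ≤ x, where 1 ≤ x < m. Then for 1 ≤ n ≤ x one has ρ(n) = 1 if n is a perfect square and ρ(n) = 0 otherwise, where ρ(n) = ∑_{d ∣ n} χ(d). Consequently ∑_{1 ≤ n ≤ x} ρ(n) ≤ 2·x^{1/2}. -/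
/-!
For a prime `p < m`, `χ p` is a root of unity in `ℝ`, so `χ p ≠ 1` forces `χ p = -1`.
Hence on the divisors of `n ≤ x` the character agrees with the Liouville function `λ`, and
`∑_{d ∣ n} λ d` is the multiplicative function that is `1` on even prime powers and `0` on odd
ones, i.e. the indicator of the squares. At most `√x` squares lie in `[1, x]`.
-/

open ArithmeticFunction Finset
open scoped ArithmeticFunction.zeta

theorem Nat.isSquare_iff_forall_even_factorization {n : ℕ} (hn : n ≠ 0) :
    IsSquare n ↔ ∀ p, Even (n.factorization p) := by
  constructor
  · rintro ⟨k, rfl⟩ p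
    have hk : k ≠ 0 := by rintro rfl; exact hn rfl
    simp [Nat.factorization_mul hk hk]
  · intro h
    refine ⟨n.factorization.prod fun p e => p ^ (e / 2), ?_⟩
    conv_lhs => rw [← Nat.prod_factorization_pow_eq_self hn]
    rw [← Finsupp.prod_mul]
    refine Finsupp.prod_congr fun p _ => ?_
    rw [← pow_add, ← two_mul, Nat.mul_div_cancel' (h p).two_dvd]

namespace ArithmeticFunction

theorem zeta_mul_liouville_apply_prime_pow {p : ℕ} (hp : p.Prime) (k : ℕ) :
    ((ζ : ArithmeticFunction ℤ) * liouville) (p ^ k) = if Even k then 1 else 0 := by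
  rw [coe_zeta_mul_apply, Nat.sum_divisors_prime_pow hp]
  have hlam : ∀ j, liouville (p ^ j) = (-1) ^ j := fun j => by
    rw [liouville_apply (pow_ne_zero _ hp.ne_zero), cardFactors_apply_prime_pow hp]
  simp only [hlam, neg_one_geom_sum, Nat.even_add_one, ite_not]

theorem sum_divisors_liouville {n : ℕ} (hn : n ≠ 0) :
    ∑ d ∈ n.divisors, liouville d = if IsSquare n then 1 else 0 := by
  have hmul : ((ζ : ArithmeticFunction ℤ) * liouville).IsMultiplicative :=
    isMultiplicative_zeta.natCast.mul isMultiplicative_liouville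
  rw [← coe_zeta_mul_apply, hmul.multiplicative_factorization _ hn, Finsupp.prod,
    prod_congr rfl fun p hp =>
      zeta_mul_liouville_apply_prime_pow (Nat.prime_of_mem_primeFactors (by simpa using hp)) _]
  refine prod_boole.trans (if_congr ?_ rfl rfl)
  rw [Nat.isSquare_iff_forall_even_factorization hn]
  refine ⟨fun h p => ?_, fun h p _ => h p⟩
  by_cases hp : p ∈ n.factorization.support
  · exact h p hp
  · simp [Finsupp.notMem_support_iff.mp hp]

end ArithmeticFunction

namespace MulChar

variable {R R' : Type*} [CommSemiring R] [CommRing R']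

theorem natCast_eq_liouville (χ : MulChar R R') {d : ℕ} (hd : d ≠ 0)
    (hχ : ∀ p ∈ d.primeFactorsList, χ p = -1) : χ d = liouville d := by
  conv_lhs => rw [← Nat.prod_primeFactorsList hd]
  rw [Nat.cast_list_prod, map_list_prod, List.map_map,
    List.map_congr_left (f := ⇑χ ∘ Nat.cast) hχ, List.map_const', List.prod_replicate,
    liouville_apply hd, cardFactors_apply]
  push_cast
  rfl

theorem sum_divisors_eq_ite_isSquare (χ : MulChar R R') {n : ℕ} (hn : n ≠ 0)
    (hχ : ∀ p, p.Prime → p ∣ n → χ p = -1) :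
    ∑ d ∈ n.divisors, χ d = if IsSquare n then 1 else 0 := by
  have hliouville : ∀ d ∈ n.divisors, χ d = liouville d := fun d hd =>
    χ.natCast_eq_liouville (Nat.ne_of_gt (Nat.pos_of_mem_divisors hd)) fun p hp =>
      hχ p (Nat.prime_of_mem_primeFactorsList hp)
        ((Nat.dvd_of_mem_primeFactorsList hp).trans (Nat.dvd_of_mem_divisors hd))
  rw [sum_congr rfl hliouville, ← Int.cast_sum, sum_divisors_liouville hn]
  split_ifs <;> simp

theorem eq_neg_one_of_ne_one [LinearOrder R'] [IsStrictOrderedRing R'] [Finite Rˣ]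
    (χ : MulChar R R') {a : R} (ha : IsUnit a) (h : χ a ≠ 1) : χ a = -1 := by
  obtain ⟨u, rfl⟩ := ha
  have hpow : χ u ^ Nat.card Rˣ = 1 := by
    rw [← map_pow, ← Units.val_pow_eq_pow_val, pow_card_eq_one', Units.val_one, map_one]
  rcases pow_eq_one_iff_cases.mp hpow with h0 | h1 | ⟨hneg, -⟩
  · exact absurd h0 Nat.card_pos.ne'
  · exact absurd h1 h
  · exact hneg

end MulChar

theorem Nat.card_filter_isSquare_Icc_le (N : ℕ) : #{n ∈ Icc 1 N | IsSquare n} ≤ N.sqrt := by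
  calc #{n ∈ Icc 1 N | IsSquare n} ≤ #((Icc 1 N.sqrt).image fun k => k * k) := by
        refine card_le_card fun n hn => ?_
        simp only [mem_filter, mem_Icc] at hn
        obtain ⟨⟨hn1, hnN⟩, k, rfl⟩ := hn
        refine mem_image.mpr ⟨k, mem_Icc.mpr ⟨?_, Nat.le_sqrt.mpr hnN⟩, rfl⟩
        exact Nat.pos_of_ne_zero (by rintro rfl; simp at hn1)
    _ ≤ N.sqrt := Finset.card_image_le.trans (by simp)

/-- Let `m` be prime and `χ` a real Dirichlet character mod `m` with `χ(p) ≠ 1` for all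
primes `p ≤ x`, where `1 ≤ x < m`. Then for `1 ≤ n ≤ x`, `ρ(n) = ∑_{d ∣ n} χ(d)` equals
`1` if `n` is a perfect square and `0` otherwise; consequently
`∑_{1 ≤ n ≤ x} ρ(n) ≤ 2 √x`. -/
theorem divisor_sum_character_squares (m : ℕ) (hm : m.Prime)
    (χ : DirichletCharacter ℝ m) (x : ℝ) (hx1 : 1 ≤ x) (hxm : x < m)
    (hχ : ∀ p : ℕ, p.Prime → (p : ℝ) ≤ x → χ (p : ZMod m) ≠ 1) :
    (∀ n : ℕ, 1 ≤ n → (n : ℝ) ≤ x →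
      ∑ d ∈ n.divisors, χ (d : ZMod m) = if IsSquare n then 1 else 0) ∧
    ∑ n ∈ Finset.Icc 1 ⌊x⌋₊, ∑ d ∈ n.divisors, χ (d : ZMod m) ≤ 2 * Real.sqrt x := by
  have : Fact m.Prime := ⟨hm⟩
  have hneg : ∀ p : ℕ, p.Prime → (p : ℝ) ≤ x → χ p = -1 := fun p hp hpx => by
    have hpm : p < m := by exact_mod_cast hpx.trans_lt hxm
    have hunit : IsUnit (p : ZMod m) :=
      (ZMod.isUnit_iff_coprime p m).mpr ((Nat.coprime_primes hp hm).mpr hpm.ne)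
    exact χ.eq_neg_one_of_ne_one hunit (hχ p hp hpx)
  have hρ : ∀ n : ℕ, 1 ≤ n → (n : ℝ) ≤ x →
      ∑ d ∈ n.divisors, χ (d : ZMod m) = if IsSquare n then 1 else 0 := fun n hn hnx =>
    χ.sum_divisors_eq_ite_isSquare (by omega) fun p hp hpn =>
      hneg p hp ((Nat.cast_le.mpr (Nat.le_of_dvd hn hpn)).trans hnx)
  refine ⟨hρ, ?_⟩
  have hx0 : 0 ≤ x := by linarith
  calc ∑ n ∈ Icc 1 ⌊x⌋₊, ∑ d ∈ n.divisors, χ (d : ZMod m)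
      = #{n ∈ Icc 1 ⌊x⌋₊ | IsSquare n} := by
        rw [natCast_card_filter]
        exact sum_congr rfl fun n hn =>
          hρ n (mem_Icc.mp hn).1 ((Nat.le_floor_iff hx0).mp (mem_Icc.mp hn).2)
    _ ≤ (⌊x⌋₊.sqrt : ℝ) := by exact_mod_cast Nat.card_filter_isSquare_Icc_le _
    _ ≤ √(⌊x⌋₊ : ℝ) := Real.nat_sqrt_le_real_sqrt
    _ ≤ √x := Real.sqrt_le_sqrt (Nat.floor_le hx0)
    _ ≤ 2 * √x := by linarith [Real.sqrt_nonneg x]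
end
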